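/- For all positive reals x, log Γ(x) ≥ (x − 1/2)·log x − x + (1/2)·log(2π), i.e., Γ(x) ≥ √(2π)·x^(x−1/2)·e^(−x). -/

import Mathlib

/-!
With `R x = log Γ(x) - ((x - 1/2) log x - x + log (2π) / 2)` we have
`R x - R (x + 1) = (x + 1/2) log (1 + 1/x) - 1 ≥ 0`, the inequality being the first term of the
series `log (1 + 1/x) = ∑ 2 / ((2k + 1) (2x + 1) ^ (2k + 1))`. Hence `R x ≥ R (x + k)` for all
`k ∈ ℕ`. On the other hand, for `y ∈ [n + 1, n + 2]` log-convexity of `Γ` bounds `log Γ(y)` below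
by `log n! + (y - n - 1) log n`, and Stirling's lower bound for `log n!` then gives
`R y ≥ -3/n`. Letting `k → ∞` yields `R x ≥ 0`.
-/

open Real Filter Topology

noncomputable def stirlingRemainder (x : ℝ) : ℝ :=
  log (Gamma x) - ((x - 1 / 2) * log x - x + log (2 * π) / 2)

lemma two_div_two_mul_add_one_le_log_one_add_inv {x : ℝ} (hx : 0 < x) :
    2 / (2 * x + 1) ≤ log (1 + x⁻¹) := by
  simpa [div_eq_mul_inv] using
    le_hasSum (hasSum_log_one_add_inv hx) 0 fun k _ => by positivity

lemma stirlingRemainder_add_one_le {x : ℝ} (hx : 0 < x) :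
    stirlingRemainder (x + 1) ≤ stirlingRemainder x := by
  have hlog : log (1 + x⁻¹) = log (x + 1) - log x := by
    rw [← log_div (by positivity) hx.ne', add_div, div_self hx.ne', one_div]
  have hstep : 1 ≤ (x + 1 / 2) * log (1 + x⁻¹) := by
    calc (1 : ℝ) = (x + 1 / 2) * (2 / (2 * x + 1)) := by field_simp
      _ ≤ _ := by gcongr; exact two_div_two_mul_add_one_le_log_one_add_inv hx
  rw [hlog] at hstep
  simp only [stirlingRemainder]
  rw [Gamma_add_one hx.ne', log_mul hx.ne' (Gamma_pos_of_pos hx).ne']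
  linarith

lemma stirlingRemainder_add_nat_le {x : ℝ} (hx : 0 < x) (n : ℕ) :
    stirlingRemainder (x + n) ≤ stirlingRemainder x := by
  induction n with
  | zero => simp
  | succ n ih =>
    calc stirlingRemainder (x + ↑(n + 1)) = stirlingRemainder (x + n + 1) := by push_cast; ring_nf
      _ ≤ stirlingRemainder (x + n) := stirlingRemainder_add_one_le (by positivity)
      _ ≤ stirlingRemainder x := ih

lemma log_Gamma_add_one_add_mul_log_le {n y : ℝ} (hn : 0 < n) (hy : n + 1 ≤ y) :
    log (Gamma (n + 1)) + (y - (n + 1)) * log n ≤ log (Gamma y) := by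
  rcases hy.eq_or_lt with rfl | hy
  · simp
  have hslope := convexOn_log_Gamma.slope_mono_adjacent (y := n + 1) (z := y)
    (Set.mem_Ioi.2 hn) (Set.mem_Ioi.2 (by linarith)) (by linarith) hy
  simp only [Function.comp, Gamma_add_one hn.ne', log_mul hn.ne' (Gamma_pos_of_pos hn).ne',
    add_sub_cancel_left, add_sub_cancel_right, div_one] at hslope ⊢
  rw [le_div_iff₀ (by linarith)] at hslope
  linarith

lemma neg_three_div_le_stirlingRemainder {n : ℕ} (hn : n ≠ 0) {y : ℝ} (hy₁ : n + 1 ≤ y)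
    (hy₂ : y ≤ n + 2) : -(3 / n) ≤ stirlingRemainder y := by
  have hn₀ : (0 : ℝ) < n := by positivity
  have hy₀ : 0 < y := by linarith
  have hfact := Stirling.le_log_factorial_stirling hn
  have hconv := log_Gamma_add_one_add_mul_log_le hn₀ hy₁
  rw [Gamma_nat_eq_factorial] at hconv
  have hlog : (n - y) / n ≤ log n - log y := by
    have := one_sub_inv_le_log_of_pos (div_pos hn₀ hy₀)
    rw [log_div hn₀.ne' hy₀.ne', inv_div] at this
    rwa [sub_div, div_self hn₀.ne']
  have hquad : -(3 / n) ≤ (y - 1 / 2) * ((n - y) / n) + (y - n) := by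
    rw [neg_le, ← sub_nonneg]
    have : 3 / n - -((y - 1 / 2) * ((n - y) / n) + (y - n)) =
        (3 + (y - n) * (n - y + 1 / 2)) / n := by
      field_simp; ring
    rw [this]
    apply div_nonneg _ hn₀.le
    nlinarith
  have := mul_le_mul_of_nonneg_left hlog (by linarith : (0 : ℝ) ≤ y - 1 / 2)
  simp only [stirlingRemainder]
  linarith

lemma stirlingRemainder_nonneg {x : ℝ} (hx : 0 < x) : 0 ≤ stirlingRemainder x := by
  have hlim : Tendsto (fun k : ℕ => -(3 / (k : ℝ))) atTop (𝓝 0) := by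
    simpa using (tendsto_const_div_atTop_nhds_zero_nat (3 : ℝ)).neg
  refine le_of_tendsto hlim (eventually_atTop.2 ⟨1, fun k hk => ?_⟩)
  set n := ⌊x⌋₊ + k
  have hnx : (n : ℝ) ≤ x + k := by push_cast [n]; linarith [Nat.floor_le hx.le]
  have hxn : x + k < n + 1 := by push_cast [n]; linarith [Nat.lt_floor_add_one x]
  calc -(3 / (k : ℝ)) ≤ -(3 / (n : ℝ)) := by
        gcongr; exact_mod_cast Nat.le_add_left k ⌊x⌋₊
    _ ≤ stirlingRemainder (x + k + 1) :=
        neg_three_div_le_stirlingRemainder (by omega) (by linarith) (by linarith)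
    _ ≤ stirlingRemainder x := by
        simpa [add_assoc] using stirlingRemainder_add_nat_le hx (k + 1)

theorem stirling_lower_bound (x : ℝ) (hx : 0 < x) :
    Real.sqrt (2 * Real.pi) * x^(x - 1/2) * Real.exp (-x) ≤ Real.Gamma x := by
  have hstirling : Real.sqrt (2 * Real.pi) * x^(x - 1/2) * Real.exp (-x)
      = exp ((x - 1 / 2) * log x - x + log (2 * π) / 2) := by
    rw [exp_add, exp_sub, sqrt_eq_rpow, rpow_def_of_pos (by positivity), rpow_def_of_pos hx,
      exp_neg]
    ring_nf
  rw [hstirling, ← exp_log (Gamma_pos_of_pos hx), exp_le_exp, ← sub_nonneg]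
  exact stirlingRemainder_nonneg hx
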